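/- Let m, k be integers with m ≥ 5 and 2 ≤ k ≤ ⌊(m-1)/2⌋, and let ḡ_{(m,k)} be the associated function on 𝔽_3^m. Then every codeword of the code C_{ḡ_{(m,k)}} has Hamming weight at most 3^m - Σ_{j=0}^{k} 2^j·C(m, j), and this weight is attained by the codeword c_{1,0} (u = 1, v = 0); that is, the maximum Hamming weight of C_{ḡ_{(m,k)}} equals 3^m - Σ_{j=0}^{k} 2^j·C(m, j). -/

import Mathlib

open Finset

/-- The function `ḡ_{(m,k)} : 𝔽_3^m → 𝔽_3`: `1` if `wt(x) > k`, `0` if `wt(x) ≤ k`. -/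
def gbar {m : ℕ} (k : ℕ) (x : Fin m → ZMod 3) : ZMod 3 :=
  if k < hammingNorm x then 1 else 0

/-- The Hamming weight of the codeword `c_{u,v}` of the code `C_h`, i.e. the number
of `x ∈ 𝔽_3^m \ {0}` with `u·h(x) + v·x ≠ 0`. -/
def cwWeight {m : ℕ} (h : (Fin m → ZMod 3) → ZMod 3)
    (u : ZMod 3) (v : Fin m → ZMod 3) : ℕ :=
  (Finset.univ.filter fun x : Fin m → ZMod 3 =>
    x ≠ 0 ∧ u * h x + ∑ j, v j * x j ≠ 0).card

/-!
Write `V = Σ_{j ≤ k} 2^j C(m,j)` for the size of the Hamming ball `B` of radius `k`, on which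
`ḡ` vanishes. Since `c_{u,v}(0) = 0`, the weight of `c_{u,v}` is `3^m` minus its number of
zeros on all of `𝔽_3^m`, so it suffices to show that `c_{u,v}` has at least `V` zeros, with
equality for `c_{1,0}`, whose zero set is exactly `B`. For `v = 0` every point of `B` is a zero.
For `v ≠ 0` each hyperplane `v·x = c` has `3^(m-1)` points, and the zeros of `c_{u,v}` are the
points of `B` on `v·x = 0` together with the points outside `B` on `v·x = -u`. For `u = 0` these
form a hyperplane. For `u ≠ 0`, as `B = -B` the slices `v·x = u` and `v·x = -u` of `B` have equal
size `β`, so `V = |B ∩ {v·x = 0}| + 2β` and the number of zeros is `V - 3β + 3^(m-1)`. Both cases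
reduce to the volume bound `9V ≤ 2·3^m` for `2 ≤ k` and `2k + 1 ≤ m`, which follows from Pascal's
rule by induction on `k` along `m = 2k + 1` and then on `m`.
-/

section HammingBall

variable (ι F : Type*) [Fintype ι] [DecidableEq ι] [Fintype F] [DecidableEq F]

def hammingBall [Zero F] (k : ℕ) : Finset (ι → F) := {x | hammingNorm x ≤ k}

def ballVolume (q n k : ℕ) : ℕ := ∑ j ∈ range (k + 1), (q - 1) ^ j * n.choose j

variable {ι F}

theorem card_filter_support_eq [Zero F] (s : Finset ι) :
    #{x : ι → F | ({i | x i ≠ 0} : Finset ι) = s} = (Fintype.card F - 1) ^ #s := by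
  have : ({x : ι → F | ({i | x i ≠ 0} : Finset ι) = s} : Finset (ι → F))
      = Fintype.piFinset fun i => if i ∈ s then {0}ᶜ else {0} := by
    ext x
    simp only [mem_filter, mem_univ, true_and, Fintype.mem_piFinset, Finset.ext_iff]
    refine forall_congr' fun i => ?_
    split_ifs <;> simp_all
  simp_rw [this, Fintype.card_piFinset, apply_ite card, card_compl, card_singleton,
    prod_ite_mem, univ_inter, prod_const]

theorem card_filter_hammingNorm_eq [Zero F] (j : ℕ) :
    #{x : ι → F | hammingNorm x = j} = (Fintype.card F - 1) ^ j * (Fintype.card ι).choose j := by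
  rw [card_eq_sum_card_fiberwise (f := fun x : ι → F => ({i | x i ≠ 0} : Finset ι))
    (t := powersetCard j univ) fun x hx => by simpa [mem_powersetCard, hammingNorm] using hx]
  calc _ = ∑ s ∈ powersetCard j (univ : Finset ι), (Fintype.card F - 1) ^ j := by
        refine sum_congr rfl fun s hs => ?_
        rw [mem_powersetCard] at hs
        rw [← hs.2, ← card_filter_support_eq, filter_filter]
        congr 1
        ext x
        simp only [mem_filter, mem_univ, true_and, and_iff_right_iff_imp]
        rintro rfl
        rfl
    _ = _ := by rw [sum_const, card_powersetCard, card_univ, smul_eq_mul, mul_comm]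

theorem card_hammingBall [Zero F] (k : ℕ) :
    #(hammingBall ι F k) = ballVolume (Fintype.card F) (Fintype.card ι) k := by
  rw [hammingBall, card_eq_sum_card_fiberwise (f := hammingNorm) (t := range (k + 1))
    fun x hx => by simpa [Nat.lt_succ_iff] using hx]
  refine sum_congr rfl fun j hj => ?_
  rw [← card_filter_hammingNorm_eq, filter_filter]
  congr 1
  ext x
  simp only [mem_filter, mem_univ, true_and, and_iff_right_iff_imp]
  rintro rfl
  simpa [Nat.lt_succ_iff] using hj

theorem neg_mem_hammingBall [AddGroup F] {k : ℕ} {x : ι → F} (hx : x ∈ hammingBall ι F k) :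
    -x ∈ hammingBall ι F k := by
  have : hammingNorm (-x) = hammingNorm x :=
    hammingNorm_comp (fun _ => Neg.neg) (fun _ => neg_injective) (fun _ => neg_zero)
  simpa [hammingBall, this] using hx

end HammingBall

namespace ballVolume

theorem zero_right (q n : ℕ) : ballVolume q n 0 = 1 := by simp [ballVolume]

theorem succ_right (q n k : ℕ) :
    ballVolume q n (k + 1) = ballVolume q n k + (q - 1) ^ (k + 1) * n.choose (k + 1) :=
  sum_range_succ _ _

theorem mono_right (q n : ℕ) {k k' : ℕ} (h : k ≤ k') : ballVolume q n k ≤ ballVolume q n k' :=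
  sum_le_sum_of_subset (range_subset_range.2 (by omega))

theorem succ_succ (q n k : ℕ) :
    ballVolume q (n + 1) (k + 1) = ballVolume q n (k + 1) + (q - 1) * ballVolume q n k := by
  simp only [ballVolume]
  rw [sum_range_succ' _ (k + 1), sum_range_succ' _ (k + 1)]
  simp only [Nat.choose_succ_succ, Nat.succ_eq_add_one, pow_succ, mul_add, sum_add_distrib,
    mul_sum, Nat.choose_zero_right]
  ring_nf

theorem succ_left_le {q : ℕ} (hq : 0 < q) (n k : ℕ) :
    ballVolume q (n + 1) k ≤ q * ballVolume q n k := by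
  rcases k with _ | k
  · simpa only [zero_right, mul_one]
  · calc ballVolume q (n + 1) (k + 1)
        ≤ ballVolume q n (k + 1) + (q - 1) * ballVolume q n (k + 1) := by
          rw [succ_succ]; gcongr; exact mono_right q n k.le_succ
      _ = q * ballVolume q n (k + 1) := by
          obtain ⟨p, rfl⟩ := Nat.exists_eq_add_one_of_ne_zero hq.ne'
          rw [Nat.add_sub_cancel]
          ring

theorem three_two_mul_add_three_le (k : ℕ) :
    ballVolume 3 (2 * k + 3) (k + 1) ≤ 9 * ballVolume 3 (2 * k + 1) k := by
  rcases k with _ | k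
  · simp [ballVolume, sum_range_succ]
  -- Two rounds of Pascal's rule and `C(A, k+2) = C(A, k+1)` give, for `A = 2k + 3`,
  -- `V(A + 2, k + 2) = 9 V(A, k + 1) - 2^(k+2) C(A, k+1)`.
  obtain ⟨A, hA⟩ : ∃ A, 2 * (k + 1) + 1 = A := ⟨_, rfl⟩
  have hsymm : A.choose (k + 2) = A.choose (k + 1) := by
    rw [Nat.choose_symm_of_eq_add]; omega
  have := succ_succ 3 (A + 1) (k + 1)
  have := succ_succ 3 A (k + 1)
  have := succ_succ 3 A k
  have := succ_right 3 A (k + 1)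
  have := succ_right 3 A k
  have e4 : (3 - 1) ^ (k + 1 + 1) * A.choose (k + 1 + 1) = 4 * (2 ^ k * A.choose (k + 1)) := by
    rw [hsymm]; ring
  have e5 : (3 - 1) ^ (k + 1) * A.choose (k + 1) = 2 * (2 ^ k * A.choose (k + 1)) := by ring
  rw [show 2 * (k + 1) + 3 = A + 1 + 1 by omega, hA]
  omega

theorem nine_mul_le_two_mul_three_pow {n k : ℕ} (hk : 2 ≤ k) (hn : 2 * k + 1 ≤ n) :
    9 * ballVolume 3 n k ≤ 2 * 3 ^ n := by
  induction n, hn using Nat.le_induction with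
  | base =>
    induction k, hk using Nat.le_induction with
    | base => decide
    | succ k hk ih =>
      calc 9 * ballVolume 3 (2 * (k + 1) + 1) (k + 1)
          ≤ 9 * (9 * ballVolume 3 (2 * k + 1) k) := by
            gcongr; exact three_two_mul_add_three_le k
        _ ≤ 2 * 3 ^ (2 * (k + 1) + 1) := by
            rw [show 2 * (k + 1) + 1 = 2 * k + 1 + 2 by ring, pow_add]; omega
  | succ n hn ih =>
    calc 9 * ballVolume 3 (n + 1) k ≤ 9 * (3 * ballVolume 3 n k) := by
          gcongr; exact succ_left_le (by norm_num) n k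
      _ ≤ 2 * 3 ^ (n + 1) := by rw [pow_succ]; omega

end ballVolume

section DotProduct

variable {ι F : Type*} [Fintype ι] [DecidableEq F]

theorem card_filter_dotProduct_eq_neg [Ring F] (s : Finset (ι → F)) (hs : ∀ x ∈ s, -x ∈ s)
    (v : ι → F) (c : F) : #{x ∈ s | v ⬝ᵥ x = -c} = #{x ∈ s | v ⬝ᵥ x = c} := by
  refine card_nbij' (-·) (-·) ?_ ?_ (fun x _ => neg_neg x) (fun x _ => neg_neg x) <;>
    · intro x hx
      simp only [coe_filter, Set.mem_ofPred_eq, dotProduct_neg] at hx ⊢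
      exact ⟨hs x hx.1, by simp [hx.2]⟩

theorem card_eq_card_filter_dotProduct_eq_zero_add_two_mul (s : Finset (ι → ZMod 3))
    (hs : ∀ x ∈ s, -x ∈ s) (v : ι → ZMod 3) {c : ZMod 3} (hc : c ≠ 0) :
    #s = #{x ∈ s | v ⬝ᵥ x = 0} + 2 * #{x ∈ s | v ⬝ᵥ x = c} := by
  have h21 : #{x ∈ s | v ⬝ᵥ x = 2} = #{x ∈ s | v ⬝ᵥ x = 1} :=
    card_filter_dotProduct_eq_neg s hs v 1
  rw [card_eq_sum_card_fiberwise (f := (v ⬝ᵥ ·)) (t := univ) fun _ _ => mem_univ _]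
  change ∑ b : Fin 3, _ = _
  rw [Fin.sum_univ_three]
  obtain rfl | rfl : c = 1 ∨ c = 2 := by revert c; decide
  all_goals omega

variable [DecidableEq ι]

theorem card_mul_card_filter_dotProduct_eq [Field F] [Fintype F] {v : ι → F} (hv : v ≠ 0)
    (c : F) : Fintype.card F * #{x : ι → F | v ⬝ᵥ x = c} = Fintype.card F ^ Fintype.card ι := by
  let f : (ι → F) →+ F :=
    { toFun := (v ⬝ᵥ ·), map_zero' := dotProduct_zero v, map_add' := dotProduct_add v }
  have hf : Function.Surjective f := fun b => by
    obtain ⟨i, hi⟩ := Function.ne_iff.mp hv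
    exact ⟨Pi.single i (b / v i), by simp [f, dotProduct_single, mul_div_cancel₀ _ hi]⟩
  have hfiber (b : F) : #{x : ι → F | v ⬝ᵥ x = b} = #{x : ι → F | v ⬝ᵥ x = c} :=
    AddMonoidHom.card_fiber_eq_of_mem_range f (hf b) (hf c)
  calc Fintype.card F * #{x : ι → F | v ⬝ᵥ x = c}
      = ∑ b : F, #{x : ι → F | v ⬝ᵥ x = b} := by simp [hfiber]
    _ = #(univ : Finset (ι → F)) :=
      (card_eq_sum_card_fiberwise (f := (v ⬝ᵥ ·)) fun _ _ => mem_univ _).symm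
    _ = Fintype.card F ^ Fintype.card ι := by rw [card_univ, Fintype.card_fun]

end DotProduct

section TernaryCode

variable {m k : ℕ}

theorem cwWeight_add_card_filter_eq_zero {h : (Fin m → ZMod 3) → ZMod 3} (h0 : h 0 = 0)
    (u : ZMod 3) (v : Fin m → ZMod 3) :
    cwWeight h u v + #{x | u * h x + v ⬝ᵥ x = 0} = 3 ^ m := by
  have : cwWeight h u v = #{x | ¬ u * h x + v ⬝ᵥ x = 0} := by
    refine congrArg card (filter_congr fun x _ => and_iff_right_of_imp ?_)
    rintro hx rfl
    simp [h0] at hx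
  rw [this, add_comm, card_filter_add_card_filter_not, card_univ, Fintype.card_fun, ZMod.card,
    Fintype.card_fin]

theorem gbar_eq_zero_of_mem_hammingBall {x : Fin m → ZMod 3}
    (hx : x ∈ hammingBall (Fin m) (ZMod 3) k) : gbar k x = 0 :=
  if_neg (by simpa [hammingBall] using hx)

theorem gbar_eq_one_of_notMem_hammingBall {x : Fin m → ZMod 3}
    (hx : x ∉ hammingBall (Fin m) (ZMod 3) k) : gbar k x = 1 :=
  if_pos (by simpa [hammingBall] using hx)

theorem card_hammingBall_fin_zmod_three :
    #(hammingBall (Fin m) (ZMod 3) k) = ballVolume 3 m k := by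
  simpa using card_hammingBall (ι := Fin m) (F := ZMod 3) k

theorem card_filter_gbar_add_card_filter_mem_hammingBall (u : ZMod 3) (v : Fin m → ZMod 3) :
    #{x | u * gbar k x + v ⬝ᵥ x = 0} + #{x ∈ hammingBall (Fin m) (ZMod 3) k | v ⬝ᵥ x = -u}
      = #{x ∈ hammingBall (Fin m) (ZMod 3) k | v ⬝ᵥ x = 0} + #{x | v ⬝ᵥ x = -u} := by
  set B := hammingBall (Fin m) (ZMod 3) k
  have hin : ({x | u * gbar k x + v ⬝ᵥ x = 0} : Finset _).filter (· ∈ B)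
      = {x ∈ B | v ⬝ᵥ x = 0} := by
    ext x
    simp only [mem_filter, mem_univ, true_and]
    refine ⟨fun ⟨h, hx⟩ => ⟨hx, ?_⟩, fun ⟨hx, h⟩ => ⟨?_, hx⟩⟩ <;>
      simpa [gbar_eq_zero_of_mem_hammingBall hx] using h
  have hout : ({x | u * gbar k x + v ⬝ᵥ x = 0} : Finset _).filter (· ∉ B)
      = ({x | v ⬝ᵥ x = -u} : Finset _).filter (· ∉ B) := by
    ext x
    simp only [mem_filter, mem_univ, true_and, and_congr_left_iff]
    intro hx
    rw [gbar_eq_one_of_notMem_hammingBall hx, mul_one, add_comm, add_eq_zero_iff_eq_neg]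
  have hslice : ({x | v ⬝ᵥ x = -u} : Finset _).filter (· ∈ B) = {x ∈ B | v ⬝ᵥ x = -u} := by
    ext x; simp [and_comm]
  rw [← card_filter_add_card_filter_not (s := {x | u * gbar k x + v ⬝ᵥ x = 0}) (· ∈ B),
    ← card_filter_add_card_filter_not (s := {x | v ⬝ᵥ x = -u}) (· ∈ B), hin, hout, hslice]
  ring

theorem ballVolume_le_card_filter_gbar (hk : 2 ≤ k) (hm : 2 * k + 1 ≤ m) (u : ZMod 3)
    (v : Fin m → ZMod 3) : ballVolume 3 m k ≤ #{x | u * gbar k x + v ⬝ᵥ x = 0} := by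
  rcases eq_or_ne v 0 with rfl | hv
  · rw [← card_hammingBall_fin_zmod_three]
    exact card_le_card fun x hx => by simp [gbar_eq_zero_of_mem_hammingBall hx]
  have hvol := ballVolume.nine_mul_le_two_mul_three_pow hk hm
  have hhyperplane := card_mul_card_filter_dotProduct_eq hv (-u)
  simp only [ZMod.card, Fintype.card_fin] at hhyperplane
  have hzeros := card_filter_gbar_add_card_filter_mem_hammingBall (k := k) u v
  generalize 3 ^ m = N at hvol hhyperplane
  rcases eq_or_ne u 0 with rfl | hu
  · rw [neg_zero] at hzeros hhyperplane
    omega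
  · have hslices := card_eq_card_filter_dotProduct_eq_zero_add_two_mul
      (hammingBall (Fin m) (ZMod 3) k) (fun _ => neg_mem_hammingBall) v (neg_ne_zero.mpr hu)
    rw [card_hammingBall_fin_zmod_three] at hslices
    omega

theorem card_filter_gbar_one_zero :
    #{x : Fin m → ZMod 3 | 1 * gbar k x + 0 ⬝ᵥ x = 0} = ballVolume 3 m k := by
  rw [← card_hammingBall_fin_zmod_three, hammingBall]
  congr 1
  ext x
  simp [gbar]

end TernaryCode

theorem stmt_17_general (m k : ℕ) (hk2 : 2 ≤ k) (hk : k ≤ (m - 1) / 2) :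
    (∀ (u : ZMod 3) (v : Fin m → ZMod 3),
      (cwWeight (gbar (m := m) k) u v : ℤ)
        ≤ (3 : ℤ) ^ m - ∑ j ∈ Finset.range (k + 1), 2 ^ j * (m.choose j : ℤ))
    ∧ (cwWeight (gbar (m := m) k) 1 0 : ℤ)
        = (3 : ℤ) ^ m - ∑ j ∈ Finset.range (k + 1), 2 ^ j * (m.choose j : ℤ) := by
  have hgbar : gbar k (0 : Fin m → ZMod 3) = 0 :=
    gbar_eq_zero_of_mem_hammingBall (by simp [hammingBall])
  have hvol : (ballVolume 3 m k : ℤ) = ∑ j ∈ range (k + 1), 2 ^ j * (m.choose j : ℤ) := by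
    simp [ballVolume]
  rw [← hvol]
  refine ⟨fun u v => ?_, ?_⟩
  · have hweight := cwWeight_add_card_filter_eq_zero hgbar u v
    have := ballVolume_le_card_filter_gbar hk2 (by omega) u v
    zify at hweight this
    linarith
  · have hweight := cwWeight_add_card_filter_eq_zero hgbar 1 0
    rw [card_filter_gbar_one_zero] at hweight
    zify at hweight
    linarith

/-- For `m ≥ 5` and `2 ≤ k ≤ ⌊(m-1)/2⌋`, every codeword of
`C_{ḡ_{(m,k)}}` has Hamming weight at most `3^m - Σ_{j=0}^{k} 2^j·C(m,j)`, and this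
weight is attained by the codeword `c_{1,0}`: the maximum Hamming weight of
`C_{ḡ_{(m,k)}}` equals `3^m - Σ_{j=0}^{k} 2^j·C(m,j)`. -/
theorem stmt_17 (m k : ℕ) (hm : 5 ≤ m) (hk2 : 2 ≤ k) (hk : k ≤ (m - 1) / 2) :
    (∀ (u : ZMod 3) (v : Fin m → ZMod 3),
      (cwWeight (gbar (m := m) k) u v : ℤ)
        ≤ (3 : ℤ) ^ m - ∑ j ∈ Finset.range (k + 1), 2 ^ j * (m.choose j : ℤ))
    ∧ (cwWeight (gbar (m := m) k) 1 0 : ℤ)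
        = (3 : ℤ) ^ m - ∑ j ∈ Finset.range (k + 1), 2 ^ j * (m.choose j : ℤ) :=
  stmt_17_general m k hk2 hk
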